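/- Every divisor D on a triangulated product Δ of G and H that satisfies the balancing conditions is ℚ-Cartier. -/

import Mathlib

open scoped Classical
open Finset

section TriangulatedProduct

variable {VG VH : Type*}

/-- The column of the Laplacian matrix of `G` indexed by the vertex `w`:
its entry at `v` is `-deg v` if `v = w`, `1` if `v` is adjacent to `w`, and `0` otherwise. -/
noncomputable def lapCol (G : SimpleGraph VG) [Fintype VG] (w v : VG) : ℤ :=
  if v = w then -(((Finset.univ.filter (fun u => G.Adj v u)).card : ℤ))
  else if G.Adj v w then 1 else 0

/-- A divisor on a finite graph is principal if it lies in the ℤ-span of the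
columns of the Laplacian matrix of the graph. -/
def GraphPrincipal (G : SimpleGraph VG) [Fintype VG] (D : VG → ℤ) : Prop :=
  ∃ f : VG → ℤ, ∀ v, D v = ∑ w, f w * lapCol G w v

/-- A triangulated product of the graphs `G` and `H`: for each square
(an edge `aa'` of `G` together with an edge `bb'` of `H`) exactly one of the two
possible diagonals `{(a,b),(a',b')}`, `{(a,b'),(a',b)}` is chosen.  The structure
records the resulting symmetric "diagonal edge" relation. -/
structure TriProd (G : SimpleGraph VG) (H : SimpleGraph VH) where
  diag : VG × VH → VG × VH → Prop
  diag_symm : ∀ u v, diag u v → diag v u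
  diag_adj : ∀ a a' b b', diag (a, b) (a', b') → G.Adj a a' ∧ H.Adj b b'
  diag_choice : ∀ a a' b b', G.Adj a a' → H.Adj b b' →
    (diag (a, b) (a', b') ∧ ¬ diag (a, b') (a', b)) ∨
    (¬ diag (a, b) (a', b') ∧ diag (a, b') (a', b))

namespace TriProd

variable {G : SimpleGraph VG} {H : SimpleGraph VH}

/-- `u` and `v` form an edge of the triangulated product: a horizontal edge,
a vertical edge, or a diagonal edge. -/
def Adj (T : TriProd G H) (u v : VG × VH) : Prop :=
  (u.2 = v.2 ∧ G.Adj u.1 v.1) ∨ (u.1 = v.1 ∧ H.Adj u.2 v.2) ∨ T.diag u v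

/-- `{u, v, w}` is a triangle (2-face) of the triangulated product. -/
def IsFace (T : TriProd G H) (u v w : VG × VH) : Prop :=
  ∃ a a' b b', T.diag (a, b) (a', b') ∧
    ({u, v, w} : Finset (VG × VH)) = {(a, b), (a', b'), (a', b)}

/-- `{u, v, w}` is a triangle of the triangulated product whose diagonal edge
does not contain the vertex `x`. -/
def IsFaceAvoiding (T : TriProd G H) (u v w x : VG × VH) : Prop :=
  ∃ a a' b b', T.diag (a, b) (a', b') ∧
    ({u, v, w} : Finset (VG × VH)) = {(a, b), (a', b'), (a', b)} ∧
    x ≠ (a, b) ∧ x ≠ (a', b')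

variable [Fintype VG] [Fintype VH]

/-- The structure constant `α(e, x)` for the edge `e = {u, v}` of the
triangulated product and the vertex `x`. -/
noncomputable def alpha (T : TriProd G H) (u v x : VG × VH) : ℤ :=
  if x = u ∨ x = v then
    (if T.diag u v then 1
     else ((Finset.univ.filter (fun w => T.IsFaceAvoiding u v w x)).card : ℤ))
  else 0

/-- The divisor of the function `φ`, evaluated at the edge `{u, v}` of the
triangulated product: the sum of `φ` over the third vertices of the triangles
containing `{u, v}`, minus `α({u,v},u) φ(u) + α({u,v},v) φ(v)`. -/
noncomputable def Div (T : TriProd G H) (φ : VG × VH → ℤ) (u v : VG × VH) : ℤ :=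
  (∑ w ∈ Finset.univ.filter (fun w => T.IsFace u v w), φ w)
    - (T.alpha u v u * φ u + T.alpha u v v * φ v)

/-- A divisor on the triangulated product (a function on edges, encoded as a
function on ordered pairs of vertices) is principal if it agrees with `Div φ`
on every edge, for some `φ`. -/
def Principal (T : TriProd G H) (D : VG × VH → VG × VH → ℤ) : Prop :=
  ∃ φ : VG × VH → ℤ, ∀ u v, T.Adj u v → D u v = T.Div φ u v

/-- A divisor on the triangulated product is Cartier if near every vertex `x`
it agrees with a principal divisor on all edges containing `x`. -/
def Cartier (T : TriProd G H) (D : VG × VH → VG × VH → ℤ) : Prop :=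
  ∀ x : VG × VH, ∃ φ : VG × VH → ℤ,
    ∀ u v, T.Adj u v → (x = u ∨ x = v) → D u v = T.Div φ u v

/-- A divisor is ℚ-Cartier if some nonzero integer multiple of it is Cartier. -/
def QCartier (T : TriProd G H) (D : VG × VH → VG × VH → ℤ) : Prop :=
  ∃ m : ℤ, m ≠ 0 ∧ T.Cartier (fun u v => m * D u v)

/-- The balancing conditions for a divisor `D` on the triangulated product. -/
def Balanced (T : TriProd G H) (D : VG × VH → VG × VH → ℤ) : Prop :=
  ∀ a : VG, ∀ b : VH,
    (∀ x x' : VG, G.Adj a x → G.Adj a x' →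
      (∑ c ∈ Finset.univ.filter (fun c : VH => T.Adj (a, b) (x, c)), D (a, b) (x, c)) =
      (∑ c ∈ Finset.univ.filter (fun c : VH => T.Adj (a, b) (x', c)), D (a, b) (x', c))) ∧
    (∀ y y' : VH, H.Adj b y → H.Adj b y' →
      (∑ c ∈ Finset.univ.filter (fun c : VG => T.Adj (a, b) (c, y)), D (a, b) (c, y)) =
      (∑ c ∈ Finset.univ.filter (fun c : VG => T.Adj (a, b) (c, y')), D (a, b) (c, y')))

end TriProd

/-- The map `β` sending a pair of divisors on `G` and `H` to a divisor on the
triangulated product: `C(a)` on vertical edges `{(a,b),(a,b')}`, `D(b)` on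
horizontal edges `{(a,b),(a',b)}`, and `0` on diagonal edges. -/
noncomputable def beta (C : VG → ℤ) (D : VH → ℤ) (u v : VG × VH) : ℤ :=
  if u.1 = v.1 then C u.1 else if u.2 = v.2 then D u.2 else 0

end TriangulatedProduct

/-!
Fix a vertex `(a, b)`. By the balancing conditions, the sum of `D` over the edges from `(a, b)` to
the fibre `{x} × V(H)` is a number `s` independent of the neighbour `x` of `a`, and the sum over the
edges to `V(G) × {y}` is a number `t` independent of the neighbour `y` of `b`. Let `m` be divisible
by every vertex degree, and let `φ` vanish at `(a, b)`, take the value `q = m s / deg b` at the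
vertical neighbours `(a, y)`, `p = m t / deg a` at the horizontal neighbours `(x, b)`, and
`p + q - m D((a, b), w)` at the diagonal neighbours `w`.

On a diagonal edge, `Div φ` is the alternating sum of `φ` over the corners of its square, which is
`m D` at once. On a horizontal edge `e = {(a, b), (x, b)}`, each neighbour `y` of `b` contributes
through exactly one diagonal of the square `{a, x} × {b, y}`, so that
`Div φ e = deg b · q - m (s - D e) = m D e`. Vertical edges are the horizontal edges of the
transposed product of `H` and `G`.
-/

theorem exists_forall_eq_of_pairwise_eq {α β : Type*} [Nonempty β] {P : α → Prop} {f : α → β}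
    (h : ∀ x x', P x → P x' → f x = f x') : ∃ s, ∀ x, P x → f x = s := by
  by_cases hP : ∃ x, P x
  · obtain ⟨x₀, hx₀⟩ := hP
    exact ⟨f x₀, fun x hx => h x x₀ hx hx₀⟩
  · exact ⟨Classical.arbitrary β, fun x hx => absurd ⟨x, hx⟩ hP⟩

theorem SimpleGraph.Preconnected.degree_dvd_factorial {V : Type*} [Fintype V]
    {K : SimpleGraph V} (hK : K.Preconnected) (hedge : ∃ u w, K.Adj u w) (v : V) :
    K.degree v ∣ (Fintype.card V).factorial := by
  obtain ⟨u, w, huw⟩ := hedge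
  have := huw.nontrivial
  exact Nat.dvd_factorial (hK.degree_pos_of_nontrivial v) (K.degree_lt_card_verts v).le

namespace TriProd

variable {VG VH : Type*}

theorem triangle_eq_horizontal {a a' c c' : VG} {b y y' : VH} {w : VG × VH}
    (ha : a ≠ a') (hc : c ≠ c') (hy : y ≠ y')
    (h : ({(a, b), (a', b), w} : Finset _) = {(c, y), (c', y'), (c', y)}) :
    (c = a ∧ y = b ∧ c' = a' ∧ w = (a', y')) ∨ (c = a' ∧ y = b ∧ c' = a ∧ w = (a, y')) := by
  have h1 : (a, b) ∈ ({(c, y), (c', y'), (c', y)} : Finset _) := by simp [← h]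
  have h2 : (a', b) ∈ ({(c, y), (c', y'), (c', y)} : Finset _) := by simp [← h]
  have h3 : (c', y') ∈ ({(a, b), (a', b), w} : Finset _) := by simp [h]
  simp only [mem_insert, mem_singleton, Prod.mk.injEq] at h1 h2 h3
  rcases h1 with ⟨_, _⟩ | ⟨_, _⟩ | ⟨_, _⟩ <;> rcases h2 with ⟨_, _⟩ | ⟨_, _⟩ | ⟨_, _⟩ <;>
    subst_vars <;> simp_all <;> tauto

theorem triangle_eq_diagonal {a a' c c' : VG} {b b' y y' : VH} {w : VG × VH}
    (ha : a ≠ a') (hb : b ≠ b') (hc : c ≠ c') (hy : y ≠ y')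
    (h : ({(a, b), (a', b'), w} : Finset _) = {(c, y), (c', y'), (c', y)}) :
    (c = a ∧ y = b ∧ c' = a' ∧ y' = b' ∧ w = (a', b)) ∨
      (c = a' ∧ y = b' ∧ c' = a ∧ y' = b ∧ w = (a, b')) := by
  have h1 : (a, b) ∈ ({(c, y), (c', y'), (c', y)} : Finset _) := by simp [← h]
  have h2 : (a', b') ∈ ({(c, y), (c', y'), (c', y)} : Finset _) := by simp [← h]
  have h3 : (c', y) ∈ ({(a, b), (a', b'), w} : Finset _) := by simp [h]
  simp only [mem_insert, mem_singleton, Prod.mk.injEq] at h1 h2 h3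
  rcases h1 with ⟨_, _⟩ | ⟨_, _⟩ | ⟨_, _⟩ <;> rcases h2 with ⟨_, _⟩ | ⟨_, _⟩ | ⟨_, _⟩ <;>
    subst_vars <;> simp_all
  tauto

variable {G : SimpleGraph VG} {H : SimpleGraph VH} (T : TriProd G H)

theorem fst_ne_of_diag {u v : VG × VH} (h : T.diag u v) : u.1 ≠ v.1 :=
  (T.diag_adj _ _ _ _ h).1.ne

theorem snd_ne_of_diag {u v : VG × VH} (h : T.diag u v) : u.2 ≠ v.2 :=
  (T.diag_adj _ _ _ _ h).2.ne

theorem adj_symm {u v : VG × VH} (h : T.Adj u v) : T.Adj v u := by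
  rcases h with ⟨h1, h2⟩ | ⟨h1, h2⟩ | h
  · exact Or.inl ⟨h1.symm, h2.symm⟩
  · exact Or.inr (Or.inl ⟨h1.symm, h2.symm⟩)
  · exact Or.inr (Or.inr (T.diag_symm _ _ h))

theorem isFace_comm {u v w : VG × VH} : T.IsFace u v w ↔ T.IsFace v u w := by
  simp only [IsFace, Finset.insert_comm u v]

theorem isFaceAvoiding_comm {u v w x : VG × VH} :
    T.IsFaceAvoiding u v w x ↔ T.IsFaceAvoiding v u w x := by
  simp only [IsFaceAvoiding, Finset.insert_comm u v]

theorem isFace_diag_iff {a a' : VG} {b b' : VH} (hd : T.diag (a, b) (a', b')) {w : VG × VH} :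
    T.IsFace (a, b) (a', b') w ↔ w = (a', b) ∨ w = (a, b') := by
  constructor
  · rintro ⟨c, c', y, y', hd', h⟩
    rcases triangle_eq_diagonal (T.fst_ne_of_diag hd) (T.snd_ne_of_diag hd)
      (T.fst_ne_of_diag hd') (T.snd_ne_of_diag hd') h with ⟨-, -, -, -, hw⟩ | ⟨-, -, -, -, hw⟩
    · exact Or.inl hw
    · exact Or.inr hw
  · rintro (rfl | rfl)
    · exact ⟨a, a', b, b', hd, rfl⟩
    · refine ⟨a', a, b', b, T.diag_symm _ _ hd, ?_⟩
      ext z; simp only [mem_insert, mem_singleton]; tauto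

theorem isFace_horizontal_iff {a a' : VG} {b : VH} (ha : G.Adj a a') {w : VG × VH} :
    T.IsFace (a, b) (a', b) w ↔
      (∃ y, T.diag (a, b) (a', y) ∧ (a', y) = w) ∨ ∃ y, T.diag (a', b) (a, y) ∧ (a, y) = w := by
  constructor
  · rintro ⟨c, c', y, y', hd, h⟩
    rcases triangle_eq_horizontal ha.ne (T.fst_ne_of_diag hd) (T.snd_ne_of_diag hd) h with
      ⟨rfl, rfl, rfl, rfl⟩ | ⟨rfl, rfl, rfl, rfl⟩
    · exact Or.inl ⟨y', hd, rfl⟩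
    · exact Or.inr ⟨y', hd, rfl⟩
  · rintro (⟨y, hd, rfl⟩ | ⟨y, hd, rfl⟩)
    · exact ⟨a, a', b, y, hd, by ext z; simp only [mem_insert, mem_singleton]; tauto⟩
    · exact ⟨a', a, b, y, hd, by ext z; simp only [mem_insert, mem_singleton]; tauto⟩

theorem isFaceAvoiding_horizontal_iff {a a' : VG} {b : VH} (ha : G.Adj a a') {w : VG × VH} :
    T.IsFaceAvoiding (a, b) (a', b) w (a, b) ↔ ∃ y, T.diag (a', b) (a, y) ∧ (a, y) = w := by
  constructor
  · rintro ⟨c, c', y, y', hd, h, hx, -⟩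
    rcases triangle_eq_horizontal ha.ne (T.fst_ne_of_diag hd) (T.snd_ne_of_diag hd) h with
      ⟨rfl, rfl, rfl, rfl⟩ | ⟨rfl, rfl, rfl, rfl⟩
    · exact absurd rfl hx
    · exact ⟨y', hd, rfl⟩
  · rintro ⟨y, hd, rfl⟩
    refine ⟨a', a, b, y, hd, ?_, fun h => ha.ne (Prod.ext_iff.1 h).1,
      fun h => T.snd_ne_of_diag hd (Prod.ext_iff.1 h).2⟩
    ext z; simp only [mem_insert, mem_singleton]; tauto

def swap : TriProd H G where
  diag u v := T.diag u.swap v.swap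
  diag_symm _ _ := T.diag_symm _ _
  diag_adj a a' b b' h := (T.diag_adj b b' a a' h).symm
  diag_choice a a' b b' ha hb := by
    have hsymm : T.diag (b, a') (b', a) ↔ T.diag (b', a) (b, a') :=
      ⟨T.diag_symm _ _, T.diag_symm _ _⟩
    simpa only [Prod.swap_prod_mk, hsymm] using T.diag_choice b b' a a' hb ha

@[simp]
theorem swap_diag {u v : VH × VG} : T.swap.diag u v ↔ T.diag u.swap v.swap := Iff.rfl

@[simp]
theorem swap_swap : T.swap.swap = T := rfl

@[simp]
theorem swap_adj {u v : VH × VG} : T.swap.Adj u v ↔ T.Adj u.swap v.swap := by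
  simp only [Adj, swap_diag, Prod.fst_swap, Prod.snd_swap]
  tauto

theorem IsFace.swap {T : TriProd G H} {u v w : VG × VH} (h : T.IsFace u v w) :
    T.swap.IsFace u.swap v.swap w.swap := by
  obtain ⟨c, c', y, y', hd, h⟩ := h
  refine ⟨y', y, c', c, T.diag_symm _ _ hd, ?_⟩
  have h' := congrArg (image Prod.swap) h
  simp only [image_insert, image_singleton, Prod.swap_prod_mk] at h'
  rw [h']
  ext z; simp only [mem_insert, mem_singleton]; tauto

@[simp]
theorem isFace_swap {u v w : VG × VH} : T.swap.IsFace u.swap v.swap w.swap ↔ T.IsFace u v w :=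
  ⟨fun h => by simpa using h.swap, IsFace.swap⟩

theorem IsFaceAvoiding.swap {T : TriProd G H} {u v w x : VG × VH}
    (h : T.IsFaceAvoiding u v w x) : T.swap.IsFaceAvoiding u.swap v.swap w.swap x.swap := by
  obtain ⟨c, c', y, y', hd, h, hx, hx'⟩ := h
  refine ⟨y', y, c', c, T.diag_symm _ _ hd, ?_, ?_, ?_⟩
  · have h' := congrArg (image Prod.swap) h
    simp only [image_insert, image_singleton, Prod.swap_prod_mk] at h'
    rw [h']
    ext z; simp only [mem_insert, mem_singleton]; tauto
  · simpa [← Prod.swap_inj (p := x)] using hx'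
  · simpa [← Prod.swap_inj (p := x)] using hx

@[simp]
theorem isFaceAvoiding_swap {u v w x : VG × VH} :
    T.swap.IsFaceAvoiding u.swap v.swap w.swap x.swap ↔ T.IsFaceAvoiding u v w x :=
  ⟨fun h => by simpa using h.swap, IsFaceAvoiding.swap⟩

variable [Fintype VH]

/-- Each neighbour `y` of `b` carries exactly one of the two diagonals of the square
`{a, a'} × {b, y}`. -/
theorem card_diag_add_card_diag {a a' : VG} {b : VH} (ha : G.Adj a a') :
    #{y | T.diag (a, b) (a', y)} + #{y | T.diag (a', b) (a, y)} = H.degree b := by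
  rw [← H.card_neighborFinset_eq_degree, H.neighborFinset_eq_filter,
    ← card_filter_add_card_filter_not (s := {y | H.Adj b y}) (fun y => T.diag (a, b) (a', y))]
  congr 2 <;> ext y <;> simp only [mem_filter, mem_univ, true_and]
  · exact ⟨fun hd => ⟨(T.diag_adj _ _ _ _ hd).2, hd⟩, And.right⟩
  · constructor
    · intro hd
      have hy := (T.diag_adj _ _ _ _ hd).2
      rcases T.diag_choice a a' b y ha hy with ⟨-, hn⟩ | ⟨hn, -⟩
      · exact absurd (T.diag_symm _ _ hd) hn
      · exact ⟨hy, hn⟩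
    · rintro ⟨hy, hn⟩
      rcases T.diag_choice a a' b y ha hy with ⟨h, -⟩ | ⟨-, h⟩
      · exact absurd h hn
      · exact T.diag_symm _ _ h

theorem filter_adj_horizontal {a a' : VG} {b : VH} (ha : G.Adj a a') :
    ({c | T.Adj (a, b) (a', c)} : Finset VH) =
      insert b ({y | T.diag (a, b) (a', y)} : Finset VH) := by
  ext c
  simp only [mem_insert, mem_filter, mem_univ, true_and]
  simp only [Adj]
  constructor
  · rintro (⟨hc, -⟩ | ⟨haa, -⟩ | hd)
    · exact Or.inl hc.symm
    · exact absurd haa ha.ne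
    · exact Or.inr hd
  · rintro (rfl | hd)
    · exact Or.inl ⟨rfl, ha⟩
    · exact Or.inr (Or.inr hd)

variable [Fintype VG]

theorem alpha_swap (u v x : VG × VH) : T.swap.alpha u.swap v.swap x.swap = T.alpha u v x := by
  have hcard : #{w | T.swap.IsFaceAvoiding u.swap v.swap w x.swap} =
      #{w | T.IsFaceAvoiding u v w x} :=
    card_equiv (Equiv.prodComm VH VG) fun w => by simp [← isFaceAvoiding_swap T (w := w.swap)]
  simp only [alpha, Prod.swap_inj, swap_diag, Prod.swap_swap, hcard]

theorem div_swap (φ : VG × VH → ℤ) (u v : VG × VH) :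
    T.swap.Div (φ ∘ Prod.swap) u.swap v.swap = T.Div φ u v := by
  have hsum : ∑ w with T.swap.IsFace u.swap v.swap w, φ w.swap = ∑ w with T.IsFace u v w, φ w :=
    sum_equiv (Equiv.prodComm VH VG) (fun w => by simp [← isFace_swap T (w := w.swap)])
      fun _ _ => rfl
  simp only [Div, Function.comp_apply, hsum, alpha_swap, Prod.swap_swap]

theorem alpha_comm (u v x : VG × VH) : T.alpha u v x = T.alpha v u x := by
  have hdiag : T.diag u v ↔ T.diag v u := ⟨T.diag_symm _ _, T.diag_symm _ _⟩
  simp only [alpha, or_comm, hdiag, isFaceAvoiding_comm T (u := u)]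

theorem div_comm (φ : VG × VH → ℤ) (u v : VG × VH) : T.Div φ u v = T.Div φ v u := by
  simp only [Div, isFace_comm T (u := u), alpha_comm T u v]
  ring

theorem alpha_of_diag {u v x : VG × VH} (hd : T.diag u v) (hx : x = u ∨ x = v) :
    T.alpha u v x = 1 := by
  simp only [alpha, if_pos hx, if_pos hd]

theorem alpha_horizontal_left {a a' : VG} {b : VH} (ha : G.Adj a a') :
    T.alpha (a, b) (a', b) (a, b) = #{y | T.diag (a', b) (a, y)} := by
  have hnd : ¬T.diag (a, b) (a', b) := fun hd => T.snd_ne_of_diag hd rfl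
  have hfaces : ({w | T.IsFaceAvoiding (a, b) (a', b) w (a, b)} : Finset _) =
      image (fun y => (a, y)) {y | T.diag (a', b) (a, y)} := by
    ext w
    simp [isFaceAvoiding_horizontal_iff T ha]
  rw [alpha, if_pos (Or.inl rfl), if_neg hnd, hfaces,
    card_image_of_injective _ fun _ _ h => (Prod.ext_iff.1 h).2]

theorem alpha_horizontal_right {a a' : VG} {b : VH} (ha : G.Adj a a') :
    T.alpha (a, b) (a', b) (a', b) = #{y | T.diag (a, b) (a', y)} := by
  rw [alpha_comm, alpha_horizontal_left T ha.symm]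

theorem div_horizontal {a a' : VG} {b : VH} (ha : G.Adj a a') (φ : VG × VH → ℤ) :
    T.Div φ (a, b) (a', b) =
      ∑ y with T.diag (a, b) (a', y), φ (a', y) + ∑ y with T.diag (a', b) (a, y), φ (a, y) -
        (#{y | T.diag (a', b) (a, y)} * φ (a, b) + #{y | T.diag (a, b) (a', y)} * φ (a', b)) := by
  have hfaces : ({w | T.IsFace (a, b) (a', b) w} : Finset _) =
      image (fun y => (a', y)) {y | T.diag (a, b) (a', y)} ∪
        image (fun y => (a, y)) {y | T.diag (a', b) (a, y)} := by
    ext w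
    simp [isFace_horizontal_iff T ha]
  have hdisj : Disjoint (image (fun y => (a', y)) {y | T.diag (a, b) (a', y)})
      (image (fun y => (a, y)) {y | T.diag (a', b) (a, y)}) := by
    simp only [disjoint_left, mem_image]
    rintro _ ⟨y, -, rfl⟩ ⟨y', -, h⟩
    exact ha.ne (Prod.ext_iff.1 h).1
  rw [Div, hfaces, sum_union hdisj, sum_image fun _ _ _ _ h => (Prod.ext_iff.1 h).2,
    sum_image fun _ _ _ _ h => (Prod.ext_iff.1 h).2, alpha_horizontal_left T ha,
    alpha_horizontal_right T ha]

theorem div_horizontal_eq_mul {a a' : VG} {b : VH} (ha : G.Adj a a') {φ : VG × VH → ℤ}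
    (D : VG × VH → VG × VH → ℤ) {m p q : ℤ} (h0 : φ (a, b) = 0) (hp : φ (a', b) = p)
    (hq : ∀ y, H.Adj b y → φ (a, y) = q)
    (hd : ∀ y, T.diag (a, b) (a', y) → φ (a', y) = p + q - m * D (a, b) (a', y))
    (hbal : H.degree b * q = m * ∑ c with T.Adj (a, b) (a', c), D (a, b) (a', c)) :
    T.Div φ (a, b) (a', b) = m * D (a, b) (a', b) := by
  have hdiag : ∑ y with T.diag (a, b) (a', y), φ (a', y) =
      #{y | T.diag (a, b) (a', y)} * (p + q) -
        m * ∑ y with T.diag (a, b) (a', y), D (a, b) (a', y) := by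
    rw [sum_congr rfl fun y hy => hd y (mem_filter.1 hy).2, sum_sub_distrib, sum_const,
      nsmul_eq_mul, mul_sum]
  have hvert : ∑ y with T.diag (a', b) (a, y), φ (a, y) = #{y | T.diag (a', b) (a, y)} * q := by
    rw [sum_congr rfl fun y hy => hq y (T.diag_adj _ _ _ _ (mem_filter.1 hy).2).2, sum_const,
      nsmul_eq_mul]
  have hbnot : b ∉ ({y | T.diag (a, b) (a', y)} : Finset VH) := by
    simpa using (fun hd => T.snd_ne_of_diag hd rfl : ¬T.diag (a, b) (a', b))
  have hdeg : (#{y | T.diag (a, b) (a', y)} + #{y | T.diag (a', b) (a, y)} : ℤ) = H.degree b := by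
    exact_mod_cast T.card_diag_add_card_diag ha
  rw [filter_adj_horizontal T ha, sum_insert hbnot] at hbal
  rw [div_horizontal T ha, hdiag, hvert, h0, hp]
  linear_combination hbal + q * hdeg

theorem div_vertical_eq_mul {a : VG} {b b' : VH} (hb : H.Adj b b') {φ : VG × VH → ℤ}
    (D : VG × VH → VG × VH → ℤ) {m p q : ℤ} (h0 : φ (a, b) = 0) (hq : φ (a, b') = q)
    (hp : ∀ x, G.Adj a x → φ (x, b) = p)
    (hd : ∀ x, T.diag (a, b) (x, b') → φ (x, b') = p + q - m * D (a, b) (x, b'))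
    (hbal : G.degree a * p = m * ∑ c with T.Adj (a, b) (c, b'), D (a, b) (c, b')) :
    T.Div φ (a, b) (a, b') = m * D (a, b) (a, b') := by
  have h := T.swap.div_horizontal_eq_mul hb (φ := φ ∘ Prod.swap) (fun u v => D u.swap v.swap)
    (m := m) (p := q) (q := p) h0 hq hp
    (fun x hx => (hd x hx).trans (by simp only [Prod.swap_prod_mk]; ring))
    (by simpa using hbal)
  simpa using (T.div_swap φ (a, b) (a, b')).symm.trans h

theorem div_of_diag {a a' : VG} {b b' : VH} (hd : T.diag (a, b) (a', b')) (φ : VG × VH → ℤ) :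
    T.Div φ (a, b) (a', b') = φ (a', b) + φ (a, b') - φ (a, b) - φ (a', b') := by
  have hne : (a', b) ≠ (a, b') := fun h => T.fst_ne_of_diag hd (Prod.ext_iff.1 h).1.symm
  have hfaces : ({w | T.IsFace (a, b) (a', b') w} : Finset _) = {(a', b), (a, b')} := by
    ext w
    simp [isFace_diag_iff T hd]
  rw [Div, hfaces, sum_pair hne, T.alpha_of_diag hd (Or.inl rfl), T.alpha_of_diag hd (Or.inr rfl)]
  ring

theorem div_eq_mul_of_star {a : VG} {b : VH} {φ : VG × VH → ℤ} (D : VG × VH → VG × VH → ℤ)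
    {m p q : ℤ} (h0 : φ (a, b) = 0) (hp : ∀ x, G.Adj a x → φ (x, b) = p)
    (hq : ∀ y, H.Adj b y → φ (a, y) = q)
    (hd : ∀ w, T.diag (a, b) w → φ w = p + q - m * D (a, b) w)
    (hbalG : ∀ x, G.Adj a x →
      H.degree b * q = m * ∑ c with T.Adj (a, b) (x, c), D (a, b) (x, c))
    (hbalH : ∀ y, H.Adj b y →
      G.degree a * p = m * ∑ c with T.Adj (a, b) (c, y), D (a, b) (c, y))
    {v : VG × VH} (hv : T.Adj (a, b) v) : T.Div φ (a, b) v = m * D (a, b) v := by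
  obtain ⟨x, y⟩ := v
  rcases hv with ⟨rfl : b = y, hx⟩ | ⟨rfl : a = x, hy⟩ | hxy
  · exact T.div_horizontal_eq_mul hx D h0 (hp x hx) hq (fun y => hd (x, y)) (hbalG x hx)
  · exact T.div_vertical_eq_mul hy D h0 (hq y hy) hp (fun x => hd (x, y)) (hbalH y hy)
  · obtain ⟨hx, hy⟩ := T.diag_adj _ _ _ _ hxy
    rw [T.div_of_diag hxy, h0, hp x hx, hq y hy, hd _ hxy]
    ring

theorem cartier_mul_of_balanced {m : ℤ} (hmG : ∀ a, (G.degree a : ℤ) ∣ m)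
    (hmH : ∀ b, (H.degree b : ℤ) ∣ m) {D : VG × VH → VG × VH → ℤ}
    (hsymm : ∀ u v, D u v = D v u) (hD : T.Balanced D) : T.Cartier fun u v => m * D u v := by
  rintro ⟨a, b⟩
  obtain ⟨s, hs⟩ := exists_forall_eq_of_pairwise_eq (hD a b).1
  obtain ⟨t, ht⟩ := exists_forall_eq_of_pairwise_eq (hD a b).2
  obtain ⟨p, hp⟩ : ∃ p, G.degree a * p = m * t :=
    ⟨m / G.degree a * t, by rw [← mul_assoc, Int.mul_ediv_cancel' (hmG a)]⟩
  obtain ⟨q, hq⟩ : ∃ q, H.degree b * q = m * s :=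
    ⟨m / H.degree b * s, by rw [← mul_assoc, Int.mul_ediv_cancel' (hmH b)]⟩
  let φ : VG × VH → ℤ := fun w =>
    if w = (a, b) then 0 else if w.1 = a then q else if w.2 = b then p else p + q - m * D (a, b) w
  have hstar (v : VG × VH) (hv : T.Adj (a, b) v) : T.Div φ (a, b) v = m * D (a, b) v := by
    refine T.div_eq_mul_of_star D (m := m) (p := p) (q := q) (by simp [φ])
      (fun x hx => by simp [φ, hx.ne']) (fun y hy => by simp [φ, hy.ne']) (fun ⟨x, y⟩ hxy => ?_)
      (fun x hx => by rw [hs x hx, hq]) (fun y hy => by rw [ht y hy, hp]) hv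
    have hx : x ≠ a := (T.fst_ne_of_diag hxy).symm
    have hy : y ≠ b := (T.snd_ne_of_diag hxy).symm
    simp [φ, hx, hy]
  refine ⟨φ, fun u v huv hx => ?_⟩
  rcases hx with rfl | rfl
  · exact (hstar v huv).symm
  · dsimp only
    rw [hsymm, div_comm]
    exact (hstar u (T.adj_symm huv)).symm

end TriProd

/-- Every divisor on a triangulated product of `G` and `H`
satisfying the balancing conditions is ℚ-Cartier. -/
theorem balancing_implies_qcartier {VG VH : Type*} [Fintype VG] [Fintype VH]
    (G : SimpleGraph VG) (H : SimpleGraph VH)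
    (hG : G.Connected) (hH : H.Connected)
    (hGe : ∃ a a', G.Adj a a') (hHe : ∃ b b', H.Adj b b')
    (T : TriProd G H)
    (D : VG × VH → VG × VH → ℤ) (hsymm : ∀ u v, D u v = D v u)
    (hD : T.Balanced D) :
    T.QCartier D := by
  refine ⟨((Fintype.card VG).factorial * (Fintype.card VH).factorial : ℕ), by positivity,
    T.cartier_mul_of_balanced (fun a => ?_) (fun b => ?_) hsymm hD⟩
  · exact Int.natCast_dvd_natCast.2 ((hG.preconnected.degree_dvd_factorial hGe a).mul_right _)
  · exact Int.natCast_dvd_natCast.2 ((hH.preconnected.degree_dvd_factorial hHe b).mul_left _)
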